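/- Let φ(z) = z² + z and α > 0 rational, with φⁿ(α) = Aₙ/Bₙ in lowest terms (Aₙ, Bₙ > 0). Then for all n ≥ 1, Aₙ₋₁ + Bₙ₋₁ > 1, and hence any prime divisor of Aₙ₋₁ + Bₙ₋₁ is a prime dividing Aₙ = Aₙ₋₁(Aₙ₋₁ + Bₙ₋₁) that does not divide Aₙ₋₁. -/

import Mathlib

/-! For coprime `a, b` the fraction `φ(a/b) = a(a+b)/b²` is already in lowest terms, and
`gcd(a, a+b) = gcd(a, b) = 1`. Positivity of the orbit gives `a ≥ 1`, hence `a + b > 1`. -/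

theorem Rat.num_sq_add_self (q : ℚ) : (q ^ 2 + q).num = q.num * (q.num + q.den) := by
  have hcop : IsCoprime (q.num * (q.num + q.den)) ((q.den : ℤ) ^ 2) :=
    (q.isCoprime_num_den.mul_left
      (by simpa using q.isCoprime_num_den.add_mul_right_left 1)).pow_right
  have hq : q ^ 2 + q = ((q.num * (q.num + q.den) : ℤ) : ℚ) / (((q.den : ℤ) ^ 2 : ℤ) : ℚ) := by
    conv_lhs => rw [← q.num_div_den]
    push_cast
    field_simp
  rw [hq, Rat.num_div_eq_of_coprime (by positivity) (Int.isCoprime_iff_gcd_eq_one.mp hcop)]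

theorem Rat.isCoprime_num_num_add_den (q : ℚ) : IsCoprime q.num (q.num + q.den) := by
  simpa [add_comm] using q.isCoprime_num_den.add_mul_left_right 1

theorem iterate_sq_add_self_pos {α : ℚ} (hα : 0 < α) (k : ℕ) :
    0 < (fun z : ℚ => z ^ 2 + z)^[k] α := by
  induction k with
  | zero => exact hα
  | succ k ih =>
    rw [Function.iterate_succ_apply']
    positivity

theorem stmt17 (α : ℚ) (hα : 0 < α) (n : ℕ) (hn : 1 ≤ n) :
    1 < ((fun z : ℚ => z ^ 2 + z)^[n - 1] α).num
          + (((fun z : ℚ => z ^ 2 + z)^[n - 1] α).den : ℤ) ∧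
    ((fun z : ℚ => z ^ 2 + z)^[n] α).num
      = ((fun z : ℚ => z ^ 2 + z)^[n - 1] α).num
          * (((fun z : ℚ => z ^ 2 + z)^[n - 1] α).num
              + (((fun z : ℚ => z ^ 2 + z)^[n - 1] α).den : ℤ)) ∧
    ∀ p : ℕ, p.Prime →
      (p : ℤ) ∣ ((fun z : ℚ => z ^ 2 + z)^[n - 1] α).num
                  + (((fun z : ℚ => z ^ 2 + z)^[n - 1] α).den : ℤ) →
      (p : ℤ) ∣ ((fun z : ℚ => z ^ 2 + z)^[n] α).num ∧
      ¬ (p : ℤ) ∣ ((fun z : ℚ => z ^ 2 + z)^[n - 1] α).num := by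
  obtain ⟨m, rfl⟩ : ∃ m, n = m + 1 := ⟨n - 1, by omega⟩
  simp only [Nat.add_sub_cancel]
  set q := (fun z : ℚ => z ^ 2 + z)^[m] α
  have hnum : ((fun z : ℚ => z ^ 2 + z)^[m + 1] α).num = q.num * (q.num + q.den) := by
    rw [Function.iterate_succ_apply', Rat.num_sq_add_self]
  rw [hnum]
  have hq : 0 < q.num := Rat.num_pos.mpr (iterate_sq_add_self_pos hα m)
  refine ⟨by have := q.pos; omega, rfl, fun p hp hdvd => ⟨hdvd.mul_left _, fun hpq => ?_⟩⟩
  exact (Nat.prime_iff_prime_int.mp hp).not_isUnit <|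
    q.isCoprime_num_num_add_den.isUnit_of_dvd' hpq hdvd
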